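/- Let (X,d) be a Polish metric space, c a power type cost function with exponent p₀ and associated distance d̃ = c^{1/p₀}, and μ a Borel probability measure on X. Suppose μ satisfies the concentration inequality for some a' > 0 and r₀ ≥ 0: for every Borel A ⊆ X with μ(A) ≥ 1/2 and every r ≥ r₀, μ(A_r) ≥ 1 − e^{−(r−r₀)^{p₀}/a'}, where A_r = {x : ∃ y ∈ A, d̃(x,y) ≤ r}. Then for every x₀ ∈ X, ∫ e^{δ c(x₀,y)} μ(dy) < ∞ for all δ < 1/a', and ∬ e^{δ c(x,y)} μ(dx) μ(dy) < ∞ for all δ < 1/(a' 2^{p₀−1}). -/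

import Mathlib

open MeasureTheory Filter Set
open scoped ENNReal Topology

noncomputable section

/-- The set of couplings of two measures. -/
def couplings {X : Type*} [MeasurableSpace X] (ν μ : Measure X) : Set (Measure (X × X)) :=
  {π | π.map Prod.fst = ν ∧ π.map Prod.snd = μ}

/-- Optimal transport cost for cost function `c`. -/
noncomputable def transportCost {X : Type*} [MeasurableSpace X] (c : X → X → ℝ)
    (ν μ : Measure X) : ℝ≥0∞ :=
  ⨅ π ∈ couplings ν μ, ∫⁻ p, ENNReal.ofReal (c p.1 p.2) ∂π

open Classical in
/-- Relative entropy `H(ν|μ)`. -/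
noncomputable def relEnt {X : Type*} [MeasurableSpace X] (ν μ : Measure X) : ℝ≥0∞ :=
  if ν ≪ μ ∧ Integrable (llr ν μ) ν then ENNReal.ofReal (∫ x, llr ν μ x ∂ν) else ∞

/-- Right derivative of a real function. -/
noncomputable def rderiv (φ : ℝ → ℝ) (x : ℝ) : ℝ := derivWithin φ (Set.Ioi x) x

/-!
Since `x φ'(x) ≤ p₀ φ(x)`, the ratio `φ(x) / x ^ p₀` is nonincreasing on `(0, ∞)`; hence
`φ ^ (1/p₀)` is subadditive and `d̃ = c ^ (1/p₀)` satisfies the triangle inequality.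
Fix `x₀` and a radius `R` with `μ(d̃(x₀, ·) ≤ R) ≥ 1/2`. By the triangle inequality the
`r`-enlargement of this ball lies in the ball of radius `R + r`, so concentration gives the tail
bound `μ(d̃(x₀, ·) > t) ≤ exp (-(t - R - r₀) ^ p₀ / a')`. Summing `exp (δ (n + 1) ^ p₀)` against
these tails over the shells `n ≤ d̃(x₀, ·) < n + 1` converges as soon as `δ a' < 1`.
The double integral reduces to the single one through
`c(x, y) ≤ 2 ^ (p₀ - 1) (c(x, x₀) + c(x₀, y))`, the convexity of `t ↦ t ^ p₀`.
-/

namespace ConvexOn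

variable {φ : ℝ → ℝ}

theorem map_mul_le (hconv : ConvexOn ℝ (Ici 0) φ) (hφ0 : φ 0 = 0) {t x : ℝ}
    (ht₀ : 0 ≤ t) (ht₁ : t ≤ 1) (hx : 0 ≤ x) : φ (t * x) ≤ t * φ x := by
  simpa [hφ0] using hconv.2 (mem_Ici.mpr hx) self_mem_Ici ht₀ (sub_nonneg.mpr ht₁) (by ring)

theorem monotoneOn_Ici (hconv : ConvexOn ℝ (Ici 0) φ) (hφ0 : φ 0 = 0)
    (hφpos : ∀ x > (0:ℝ), 0 < φ x) : MonotoneOn φ (Ici 0) := by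
  intro u hu v _ huv
  rcases (mem_Ici.mp hu).eq_or_lt with rfl | hu
  · rcases (huv.eq_or_lt) with rfl | hv
    · rfl
    · rw [hφ0]; exact (hφpos v hv).le
  have hv : 0 < v := hu.trans_le huv
  have hratio : u / v ≤ 1 := (div_le_one hv).mpr huv
  calc φ u = φ (u / v * v) := by rw [div_mul_cancel₀ _ hv.ne']
    _ ≤ u / v * φ v := hconv.map_mul_le hφ0 (by positivity) hratio hv.le
    _ ≤ φ v := mul_le_of_le_one_left (hφpos v hv).le hratio

theorem continuousOn_Ici_of_map_zero (hconv : ConvexOn ℝ (Ici 0) φ) (hφ0 : φ 0 = 0)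
    (hφpos : ∀ x > (0:ℝ), 0 < φ x) : ContinuousOn φ (Ici 0) := by
  intro x hx
  rcases (mem_Ici.mp hx).eq_or_lt with rfl | hx
  · rw [ContinuousWithinAt, hφ0]
    refine squeeze_zero' ?_ ?_ ((continuous_mul_const (φ 1)).tendsto' 0 0 (zero_mul _)
      |>.mono_left nhdsWithin_le_nhds)
    · filter_upwards [self_mem_nhdsWithin] with z hz
      exact hφ0 ▸ hconv.monotoneOn_Ici hφ0 hφpos self_mem_Ici hz hz
    · filter_upwards [eventually_nhdsWithin_of_eventually_nhds (eventually_lt_nhds one_pos),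
        self_mem_nhdsWithin] with z hz₁ hz₀
      simpa using hconv.map_mul_le hφ0 hz₀ hz₁.le zero_le_one
  · have := hconv.continuousOn_interior
    rw [interior_Ici] at this
    exact (this.continuousAt (Ioi_mem_nhds hx)).continuousWithinAt

theorem div_le_rderiv (hconv : ConvexOn ℝ (Ici 0) φ) (hφ0 : φ 0 = 0) {x : ℝ} (hx : 0 < x) :
    φ x / x ≤ rderiv φ x := by
  have hint : x ∈ interior (Ici (0:ℝ)) := by rwa [interior_Ici]
  calc φ x / x = slope φ 0 x := by simp [slope_def_field, hφ0]
    _ ≤ derivWithin φ (Iio x) x := hconv.slope_le_leftDeriv_of_mem_interior self_mem_Ici hint hx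
    _ ≤ rderiv φ x := hconv.leftDeriv_le_rightDeriv_of_mem_interior hint

theorem one_le_of_mul_rderiv_le (hconv : ConvexOn ℝ (Ici 0) φ) (hφ0 : φ 0 = 0)
    (hφpos : ∀ x > (0:ℝ), 0 < φ x) {p : ℝ} (hp : ∀ x > (0:ℝ), x * rderiv φ x ≤ p * φ x) :
    1 ≤ p := by
  have h₁ := hconv.div_le_rderiv hφ0 one_pos
  have h₂ := hp 1 one_pos
  rw [div_one, one_mul] at *
  nlinarith [hφpos 1 one_pos]

theorem antitoneOn_div_rpow (hconv : ConvexOn ℝ (Ici 0) φ) {p : ℝ}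
    (hp : ∀ x > (0:ℝ), x * rderiv φ x ≤ p * φ x) :
    AntitoneOn (fun x => φ x / x ^ p) (Ioi 0) := by
  have hcont : ContinuousOn φ (Ioi 0) := by
    simpa only [interior_Ici] using hconv.continuousOn_interior
  have hderiv : ∀ z > (0:ℝ), HasDerivWithinAt (fun x => φ x / x ^ p)
      ((rderiv φ z * z ^ p - φ z * (p * z ^ (p - 1))) / (z ^ p) ^ 2) (Ici z) z := by
    intro z hz
    have hφ : HasDerivWithinAt φ (rderiv φ z) (Ici z) z := by
      rw [← hasDerivWithinAt_Ioi_iff_Ici]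
      exact hconv.hasDerivWithinAt_rightDeriv_of_mem_interior (by rwa [interior_Ici])
    exact hφ.div (Real.hasDerivAt_rpow_const (Or.inl hz.ne')).hasDerivWithinAt
      (Real.rpow_pos_of_pos hz p).ne'
  intro y hy x _ hyx
  refine image_le_of_deriv_right_le_deriv_boundary (B := fun _ => φ y / y ^ p) (B' := fun _ => 0)
    ?_ (fun z hz => hderiv z (hy.trans_le hz.1)) le_rfl continuousOn_const
    (fun z _ => hasDerivWithinAt_const _ _ _) ?_ ⟨hyx, le_rfl⟩
  · exact (hcont.mono fun z hz => hy.trans_le hz.1).div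
      (continuousOn_id.rpow_const fun z hz => Or.inl (hy.trans_le hz.1).ne')
      fun z hz => (Real.rpow_pos_of_pos (hy.trans_le hz.1) p).ne'
  · intro z hz
    have hz : 0 < z := hy.trans_le hz.1
    have hz' : z ^ p = z * z ^ (p - 1) := by
      rw [Real.rpow_sub_one hz.ne', mul_div_cancel₀ _ hz.ne']
    refine div_nonpos_of_nonpos_of_nonneg ?_ (sq_nonneg _)
    rw [hz']
    nlinarith [hp z hz, Real.rpow_pos_of_pos hz (p - 1)]

theorem rpow_one_div_map_add_le (hconv : ConvexOn ℝ (Ici 0) φ) (hφ0 : φ 0 = 0)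
    (hφpos : ∀ x > (0:ℝ), 0 < φ x) {p : ℝ} (hp : ∀ x > (0:ℝ), x * rderiv φ x ≤ p * φ x)
    {s t : ℝ} (hs : 0 ≤ s) (ht : 0 ≤ t) :
    φ (s + t) ^ (1 / p) ≤ φ s ^ (1 / p) + φ t ^ (1 / p) := by
  have hp₀ : 0 < p := one_pos.trans_le (hconv.one_le_of_mul_rderiv_le hφ0 hφpos hp)
  have hzero : (0:ℝ) ^ (1 / p) = 0 := Real.zero_rpow (by positivity)
  rcases hs.eq_or_lt with rfl | hs
  · rw [zero_add, hφ0, hzero, zero_add]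
  rcases ht.eq_or_lt with rfl | ht
  · rw [add_zero, hφ0, hzero, add_zero]
  have key : ∀ u > (0:ℝ), ∀ v ≥ u, φ v ^ (1 / p) * u ≤ φ u ^ (1 / p) * v := by
    intro u hu v hv
    have hv₀ : 0 < v := hu.trans_le hv
    have h := hconv.antitoneOn_div_rpow hp (mem_Ioi.mpr hu) (mem_Ioi.mpr hv₀) hv
    rw [div_le_div_iff₀ (by positivity) (by positivity)] at h
    have hroot := Real.rpow_le_rpow (mul_nonneg (hφpos v hv₀).le (by positivity)) h
      (by positivity : 0 ≤ 1 / p)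
    rwa [Real.mul_rpow (hφpos v hv₀).le (by positivity), Real.mul_rpow (hφpos u hu).le
      (by positivity), one_div, Real.rpow_rpow_inv hu.le hp₀.ne',
      Real.rpow_rpow_inv hv₀.le hp₀.ne', ← one_div] at hroot
  have h₁ := key s hs (s + t) (by linarith)
  have h₂ := key t ht (s + t) (by linarith)
  refine le_of_mul_le_mul_right ?_ (add_pos hs ht)
  linarith

end ConvexOn

theorem Real.rpow_add_le_mul_rpow_add_rpow {a b p : ℝ} (ha : 0 ≤ a) (hb : 0 ≤ b) (hp : 1 ≤ p) :
    (a + b) ^ p ≤ 2 ^ (p - 1) * (a ^ p + b ^ p) := by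
  lift a to NNReal using ha
  lift b to NNReal using hb
  exact_mod_cast NNReal.rpow_add_le_mul_rpow_add_rpow a b hp

theorem le_two_rpow_mul_add_of_rpow_triangle {X : Type*} {D : X → X → ℝ}
    (hD : ∀ x y, 0 ≤ D x y) {p : ℝ} (hp : 1 ≤ p)
    (htri : ∀ x y z, D x z ^ (1 / p) ≤ D x y ^ (1 / p) + D y z ^ (1 / p)) (x y z : X) :
    D x z ≤ 2 ^ (p - 1) * (D x y + D y z) := by
  have hp₀ : 0 < p := one_pos.trans_le hp
  have hroot : ∀ x y, (D x y ^ (1 / p)) ^ p = D x y := fun x y => by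
    rw [one_div, Real.rpow_inv_rpow (hD x y) hp₀.ne']
  calc D x z = (D x z ^ (1 / p)) ^ p := (hroot x z).symm
    _ ≤ (D x y ^ (1 / p) + D y z ^ (1 / p)) ^ p :=
      Real.rpow_le_rpow (Real.rpow_nonneg (hD x z) _) (htri x y z) hp₀.le
    _ ≤ 2 ^ (p - 1) * (D x y + D y z) := by
      simpa only [hroot] using Real.rpow_add_le_mul_rpow_add_rpow
        (Real.rpow_nonneg (hD x y) (1 / p)) (Real.rpow_nonneg (hD y z) (1 / p)) hp

section Cost

variable {X : Type*} [PseudoMetricSpace X] {φ : ℝ → ℝ} {c : X → X → ℝ}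

theorem cost_nonneg (hconv : ConvexOn ℝ (Ici 0) φ) (hφ0 : φ 0 = 0)
    (hφpos : ∀ x > (0:ℝ), 0 < φ x) (hc : ∀ x y, c x y = φ (dist x y)) (x y : X) :
    0 ≤ c x y :=
  hc x y ▸ hφ0 ▸ hconv.monotoneOn_Ici hφ0 hφpos self_mem_Ici dist_nonneg dist_nonneg

theorem continuous_cost (hconv : ConvexOn ℝ (Ici 0) φ) (hφ0 : φ 0 = 0)
    (hφpos : ∀ x > (0:ℝ), 0 < φ x) (hc : ∀ x y, c x y = φ (dist x y)) :
    Continuous fun q : X × X => c q.1 q.2 := by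
  simp_rw [hc]
  exact (hconv.continuousOn_Ici_of_map_zero hφ0 hφpos).comp_continuous continuous_dist
    fun _ => dist_nonneg

theorem rpow_cost_le_add (hconv : ConvexOn ℝ (Ici 0) φ) (hφ0 : φ 0 = 0)
    (hφpos : ∀ x > (0:ℝ), 0 < φ x) {p : ℝ} (hp : ∀ x > (0:ℝ), x * rderiv φ x ≤ p * φ x)
    (hc : ∀ x y, c x y = φ (dist x y)) (x y z : X) :
    c x z ^ (1 / p) ≤ c x y ^ (1 / p) + c y z ^ (1 / p) := by
  have hp₀ : 0 < p := one_pos.trans_le (hconv.one_le_of_mul_rderiv_le hφ0 hφpos hp)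
  rw [hc, hc, hc]
  refine (Real.rpow_le_rpow (hc x z ▸ cost_nonneg hconv hφ0 hφpos hc x z) ?_ (by positivity)).trans
    (hconv.rpow_one_div_map_add_le hφ0 hφpos hp dist_nonneg dist_nonneg)
  exact hconv.monotoneOn_Ici hφ0 hφpos dist_nonneg (add_nonneg dist_nonneg dist_nonneg)
    (dist_triangle x y z)

end Cost

theorem exists_pos_eventually_mul_rpow_sub_div_le {p a δ : ℝ} (hp : 1 ≤ p) (hδ₀ : 0 ≤ δ)
    (hδ : δ < 1 / a) (b : ℝ) :
    ∃ κ > 0, ∀ᶠ t in atTop, δ * (t + 1) ^ p - (t - b) ^ p / a ≤ -(κ * t) := by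
  have hp₀ : 0 < p := one_pos.trans_le hp
  obtain ⟨l, hl, hl₁⟩ : ∃ l, δ * l ^ p < 1 / a ∧ 1 < l := by
    have hcont : ContinuousAt (fun l : ℝ => δ * l ^ p) 1 :=
      continuousAt_const.mul (Real.continuousAt_rpow_const _ _ (Or.inr hp₀.le))
    refine ((hcont.eventually_lt continuousAt_const (by simpa using hδ)).filter_mono
      nhdsWithin_le_nhds |>.and (self_mem_nhdsWithin (s := Ioi 1))).exists
  refine ⟨(1 / a - δ * l ^ p) / 2, by linarith, ?_⟩
  filter_upwards [eventually_ge_atTop 0, eventually_ge_atTop (b + 1), eventually_ge_atTop (2 * b),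
    eventually_ge_atTop ((1 + l * b) / (l - 1))] with t ht₀ hb₁ hb₂ hb₃
  rw [div_le_iff₀ (by linarith)] at hb₃
  have hlin : t + 1 ≤ l * (t - b) := by linarith
  have hpow : (t + 1) ^ p ≤ l ^ p * (t - b) ^ p := by
    rw [← Real.mul_rpow (by linarith) (by linarith)]
    exact Real.rpow_le_rpow (by linarith) hlin hp₀.le
  have hsuper : t - b ≤ (t - b) ^ p := Real.self_le_rpow_of_one_le (by linarith) hp
  calc δ * (t + 1) ^ p - (t - b) ^ p / a
      ≤ δ * (l ^ p * (t - b) ^ p) - (t - b) ^ p / a := by gcongr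
    _ = -((1 / a - δ * l ^ p) * (t - b) ^ p) := by ring
    _ ≤ -((1 / a - δ * l ^ p) * (t - b)) := by gcongr
    _ ≤ -((1 / a - δ * l ^ p) / 2 * t) := by nlinarith

theorem MeasureTheory.Integrable.exp_mul_of_le {α : Type*} [MeasurableSpace α] {μ : Measure α}
    {f : α → ℝ} (hf : AEStronglyMeasurable f μ) (hf₀ : ∀ x, 0 ≤ f x) {δ δ' : ℝ} (hδ : δ ≤ δ')
    (h : Integrable (fun x => Real.exp (δ' * f x)) μ) :
    Integrable (fun x => Real.exp (δ * f x)) μ :=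
  h.mono' (Real.continuous_exp.comp_aestronglyMeasurable (hf.const_mul δ)) <|
    Eventually.of_forall fun x => by
      rw [Real.norm_of_nonneg (Real.exp_pos _).le, Real.exp_le_exp]
      exact mul_le_mul_of_nonneg_right hδ (hf₀ x)

section TailBounds

variable {Ω : Type*} [MeasurableSpace Ω] {μ : Measure Ω}

theorem lintegral_le_tsum_mul_measure_le {ρ : Ω → ℝ} (hρ : Measurable ρ) (hρ₀ : ∀ ω, 0 ≤ ρ ω)
    {g : ℝ → ℝ≥0∞} (hg : MonotoneOn g (Ici 0)) :
    ∫⁻ ω, g (ρ ω) ∂μ ≤ ∑' n : ℕ, g (n + 1) * μ {ω | (n : ℝ) ≤ ρ ω} := by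
  have hmeas : ∀ n : ℕ, MeasurableSet {ω | (n : ℝ) ≤ ρ ω} :=
    fun n => measurableSet_le measurable_const hρ
  calc ∫⁻ ω, g (ρ ω) ∂μ
      ≤ ∫⁻ ω, ∑' n : ℕ, {ω | (n : ℝ) ≤ ρ ω}.indicator (fun _ => g (n + 1)) ω ∂μ := by
        refine lintegral_mono fun ω => ?_
        have hfloor : ((⌊ρ ω⌋₊ : ℕ) : ℝ) ≤ ρ ω := Nat.floor_le (hρ₀ ω)
        calc g (ρ ω) ≤ g (⌊ρ ω⌋₊ + 1) :=
              hg (hρ₀ ω) (mem_Ici.mpr (by positivity)) (Nat.lt_floor_add_one (ρ ω)).le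
          _ = {ω' | ((⌊ρ ω⌋₊ : ℕ) : ℝ) ≤ ρ ω'}.indicator (fun _ => g (⌊ρ ω⌋₊ + 1)) ω :=
              (indicator_of_mem (s := {ω' | ((⌊ρ ω⌋₊ : ℕ) : ℝ) ≤ ρ ω'}) hfloor
                fun _ => g (⌊ρ ω⌋₊ + 1)).symm
          _ ≤ _ := ENNReal.le_tsum (f := fun n : ℕ =>
              {ω | (n : ℝ) ≤ ρ ω}.indicator (fun _ => g (n + 1)) ω) ⌊ρ ω⌋₊
    _ = ∑' n : ℕ, g (n + 1) * μ {ω | (n : ℝ) ≤ ρ ω} := by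
        rw [lintegral_tsum fun n => (measurable_const.indicator (hmeas n)).aemeasurable]
        simp_rw [lintegral_indicator_const (hmeas _)]

theorem integrable_exp_mul_rpow_of_measure_lt_le [IsFiniteMeasure μ] {ρ : Ω → ℝ}
    (hρ : Measurable ρ) (hρ₀ : ∀ ω, 0 ≤ ρ ω) {p a b δ : ℝ} (hp : 1 ≤ p)
    (hδ₀ : 0 ≤ δ) (hδ : δ < 1 / a)
    (htail : ∀ t ≥ b, μ {ω | t < ρ ω} ≤ ENNReal.ofReal (Real.exp (-(t - b) ^ p / a))) :
    Integrable (fun ω => Real.exp (δ * ρ ω ^ p)) μ := by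
  refine ⟨(Real.continuous_exp.measurable.comp
    (measurable_const.mul (hρ.pow_const p))).aestronglyMeasurable, ?_⟩
  rw [hasFiniteIntegral_iff_ofReal (Eventually.of_forall fun ω => (Real.exp_pos _).le)]
  set u : ℕ → ℝ := fun n => Real.exp (δ * ((n : ℝ) + 1) ^ p) * μ.real {ω | (n : ℝ) ≤ ρ ω}
  have hu₀ : ∀ n, 0 ≤ u n := fun n => by positivity
  have hu : Summable u := by
    obtain ⟨κ, hκ, hev⟩ := exists_pos_eventually_mul_rpow_sub_div_le hp hδ₀ hδ (b + 1)
    refine Summable.of_norm_bounded_eventually_nat (g := fun n => Real.exp (-κ) ^ n)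
      (summable_geometric_of_lt_one (Real.exp_pos _).le (Real.exp_lt_one_iff.mpr (by linarith))) ?_
    filter_upwards [tendsto_natCast_atTop_atTop.eventually hev,
      tendsto_natCast_atTop_atTop.eventually (eventually_ge_atTop (b + 1))] with n hn hbn
    have hmeas : μ.real {ω | (n : ℝ) ≤ ρ ω} ≤ Real.exp (-((n : ℝ) - (b + 1)) ^ p / a) := by
      refine ENNReal.toReal_le_of_le_ofReal (Real.exp_pos _).le ?_
      calc μ {ω | (n : ℝ) ≤ ρ ω} ≤ μ {ω | (n : ℝ) - 1 < ρ ω} :=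
            measure_mono fun ω (hω : (n : ℝ) ≤ ρ ω) => show (n : ℝ) - 1 < ρ ω by linarith
        _ ≤ _ := by simpa only [sub_sub, add_comm (1 : ℝ) b] using htail ((n : ℝ) - 1) (by linarith)
    rw [Real.norm_of_nonneg (hu₀ n), ← Real.exp_nat_mul]
    calc u n ≤ Real.exp (δ * ((n : ℝ) + 1) ^ p) * Real.exp (-((n : ℝ) - (b + 1)) ^ p / a) :=
          mul_le_mul_of_nonneg_left hmeas (Real.exp_pos _).le
      _ ≤ Real.exp (n * -κ) := by
          rw [← Real.exp_add, Real.exp_le_exp, neg_div]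
          linarith
  have hg : MonotoneOn (fun t : ℝ => ENNReal.ofReal (Real.exp (δ * t ^ p))) (Ici 0) :=
    fun s hs t _ hst => ENNReal.ofReal_le_ofReal <| Real.exp_le_exp.mpr <|
      mul_le_mul_of_nonneg_left (Real.rpow_le_rpow hs hst (by linarith)) hδ₀
  calc ∫⁻ ω, ENNReal.ofReal (Real.exp (δ * ρ ω ^ p)) ∂μ
      ≤ ∑' n : ℕ, ENNReal.ofReal (Real.exp (δ * ((n : ℝ) + 1) ^ p)) * μ {ω | (n : ℝ) ≤ ρ ω} :=
        lintegral_le_tsum_mul_measure_le hρ hρ₀ hg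
    _ = ENNReal.ofReal (∑' n, u n) := by
        rw [ENNReal.ofReal_tsum_of_nonneg hu₀ hu]
        refine tsum_congr fun n => ?_
        simp only [u]
        rw [ENNReal.ofReal_mul (Real.exp_pos _).le, ofReal_measureReal]
    _ < ⊤ := ENNReal.ofReal_lt_top

theorem exists_lt_measure_setOf_le {f : Ω → ℝ} (hf : AEMeasurable f μ) {m : ℝ≥0∞}
    (hm : m < μ univ) : ∃ R, m < μ {ω | f ω ≤ R} := by
  have hlim := tendsto_measure_Iic_atTop (μ.map f)
  rw [Measure.map_apply_of_aemeasurable hf MeasurableSet.univ, preimage_univ] at hlim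
  obtain ⟨R, hR⟩ := (hlim.eventually (lt_mem_nhds hm)).exists
  exact ⟨R, by rwa [Measure.map_apply_of_aemeasurable hf measurableSet_Iic] at hR⟩

def HasConcentration (μ : Measure Ω) (D : Ω → Ω → ℝ) (p a r₀ : ℝ) : Prop :=
  ∀ A : Set Ω, MeasurableSet A → ENNReal.ofReal (1 / 2) ≤ μ A → ∀ r : ℝ, r₀ ≤ r →
    1 - ENNReal.ofReal (Real.exp (-(r - r₀) ^ p / a)) ≤ μ {x | ∃ y ∈ A, D x y ≤ r}

theorem HasConcentration.measure_lt_le [IsProbabilityMeasure μ] {D : Ω → Ω → ℝ} {p a r₀ : ℝ}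
    (hconc : HasConcentration μ D p a r₀) (hsymm : ∀ x y, D x y = D y x)
    (htri : ∀ x y z, D x z ≤ D x y + D y z) {x₀ : Ω} (hD : Measurable (D x₀)) {R : ℝ}
    (hR : ENNReal.ofReal (1 / 2) ≤ μ {y | D x₀ y ≤ R}) {t : ℝ} (ht : R + r₀ ≤ t) :
    μ {y | t < D x₀ y} ≤ ENNReal.ofReal (Real.exp (-(t - (R + r₀)) ^ p / a)) := by
  have hball : ∀ s, MeasurableSet {y | D x₀ y ≤ s} := fun s => measurableSet_le hD measurable_const
  have henlarge : {x | ∃ y ∈ {y | D x₀ y ≤ R}, D x y ≤ t - R} ⊆ {y | D x₀ y ≤ t} := by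
    rintro x ⟨y, hy, hxy⟩
    have := htri x₀ y x
    rw [mem_ofPred_eq, hsymm y x] at *
    linarith
  have hlower := (hconc _ (hball R) hR (t - R) (by linarith)).trans (measure_mono henlarge)
  rw [sub_sub] at hlower
  calc μ {y | t < D x₀ y} = 1 - μ {y | D x₀ y ≤ t} := by
        rw [← prob_compl_eq_one_sub (hball t)]
        simp only [compl_ofPred, not_le]
    _ ≤ 1 - (1 - ENNReal.ofReal (Real.exp (-(t - (R + r₀)) ^ p / a))) := tsub_le_tsub_left hlower _
    _ ≤ _ := tsub_tsub_le

theorem HasConcentration.integrable_exp_mul_rpow [IsProbabilityMeasure μ] {D : Ω → Ω → ℝ}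
    {p a r₀ : ℝ} (hconc : HasConcentration μ D p a r₀) (hsymm : ∀ x y, D x y = D y x)
    (htri : ∀ x y z, D x z ≤ D x y + D y z) {x₀ : Ω} (hD₀ : ∀ y, 0 ≤ D x₀ y)
    (hD : Measurable (D x₀)) (hp : 1 ≤ p) (ha : 0 < a) {δ : ℝ} (hδ : δ < 1 / a) :
    Integrable (fun y => Real.exp (δ * D x₀ y ^ p)) μ := by
  obtain ⟨R, hR⟩ :=
    exists_lt_measure_setOf_le (μ := μ) (m := ENNReal.ofReal (1 / 2)) hD.aemeasurable
      (by rw [measure_univ]; exact ENNReal.ofReal_lt_one.mpr (by norm_num))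
  have hint := integrable_exp_mul_rpow_of_measure_lt_le hD hD₀ hp (le_max_right δ 0)
    (max_lt hδ (by positivity)) fun t ht => hconc.measure_lt_le hsymm htri hD hR.le ht
  exact hint.exp_mul_of_le (hD.pow_const p).aestronglyMeasurable
    (fun y => Real.rpow_nonneg (hD₀ y) p) (le_max_left δ 0)

end TailBounds

theorem integrable_exp_mul_prod_of_le_mul_add {α : Type*} [MeasurableSpace α] {μ ν : Measure α}
    [SFinite ν] {D : α → α → ℝ} (hD : AEStronglyMeasurable (fun q : α × α => D q.1 q.2) (μ.prod ν))
    {x₀ : α} {K δ : ℝ} (hδ : 0 ≤ δ) (hle : ∀ x y, D x y ≤ K * (D x x₀ + D x₀ y))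
    (hμ : Integrable (fun x => Real.exp (δ * K * D x x₀)) μ)
    (hν : Integrable (fun y => Real.exp (δ * K * D x₀ y)) ν) :
    Integrable (fun q : α × α => Real.exp (δ * D q.1 q.2)) (μ.prod ν) :=
  (hμ.mul_prod hν).mono' (Real.continuous_exp.comp_aestronglyMeasurable (hD.const_mul δ)) <|
    Eventually.of_forall fun q => by
      rw [Real.norm_of_nonneg (Real.exp_pos _).le, ← Real.exp_add, Real.exp_le_exp]
      nlinarith [hle q.1 q.2]

theorem stmt7_general {X : Type*} [MetricSpace X] [TopologicalSpace.SeparableSpace X]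
    [MeasurableSpace X] [BorelSpace X]
    (μ : Measure X) [IsProbabilityMeasure μ]
    (φ : ℝ → ℝ) (hconv : ConvexOn ℝ (Set.Ici 0) φ) (hφ0 : φ 0 = 0)
    (hφpos : ∀ x > (0:ℝ), 0 < φ x)
    (c : X → X → ℝ) (hc : ∀ x y, c x y = φ (dist x y))
    (p₀ : ℝ) (hp₀ : IsLUB {p : ℝ | ∃ x > (0:ℝ), p = x * rderiv φ x / φ x} p₀)
    (a' r₀ : ℝ) (ha' : 0 < a')
    (hconc : ∀ A : Set X, MeasurableSet A → ENNReal.ofReal (1/2) ≤ μ A →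
      ∀ r : ℝ, r₀ ≤ r →
        1 - ENNReal.ofReal (Real.exp (-(r - r₀) ^ p₀ / a'))
          ≤ μ {x : X | ∃ y ∈ A, (c x y) ^ (1/p₀ : ℝ) ≤ r}) :
    (∀ x₀ : X, ∀ δ : ℝ, δ < 1 / a' →
      Integrable (fun y => Real.exp (δ * c x₀ y)) μ) ∧
    (∀ δ : ℝ, δ < 1 / (a' * 2 ^ (p₀ - 1)) →
      Integrable (fun p : X × X => Real.exp (δ * c p.1 p.2)) (μ.prod μ)) := by
  have hp : ∀ x > (0:ℝ), x * rderiv φ x ≤ p₀ * φ x := fun x hx =>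
    (div_le_iff₀ (hφpos x hx)).mp (hp₀.1 ⟨x, hx, rfl⟩)
  have hp₁ : 1 ≤ p₀ := hconv.one_le_of_mul_rderiv_le hφ0 hφpos hp
  have hc₀ := cost_nonneg hconv hφ0 hφpos hc
  have hsymm : ∀ x y, c x y = c y x := fun x y => by rw [hc, hc, dist_comm]
  have hcont := continuous_cost hconv hφ0 hφpos hc
  have hconc' : HasConcentration μ (fun x y => c x y ^ (1 / p₀)) p₀ a' r₀ := hconc
  have part₁ : ∀ x₀ : X, ∀ δ : ℝ, δ < 1 / a' → Integrable (fun y => Real.exp (δ * c x₀ y)) μ := by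
    intro x₀ δ hδ
    have hint := hconc'.integrable_exp_mul_rpow (fun x y => by rw [hsymm])
      (rpow_cost_le_add hconv hφ0 hφpos hp hc) (fun y => Real.rpow_nonneg (hc₀ x₀ y) _)
      ((hcont.comp (Continuous.prodMk_right x₀)).measurable.pow_const _) hp₁ ha' hδ
    simpa only [one_div, Real.rpow_inv_rpow (hc₀ x₀ _) (one_pos.trans_le hp₁).ne'] using hint
  refine ⟨part₁, fun δ hδ => ?_⟩
  obtain ⟨x₀⟩ := nonempty_of_isProbabilityMeasure μ
  have hK : 0 < (2:ℝ) ^ (p₀ - 1) := by positivity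
  rw [← div_div, lt_div_iff₀ hK] at hδ
  have hint := part₁ x₀ (max δ 0 * 2 ^ (p₀ - 1)) <| by
    rw [max_mul_of_nonneg _ _ hK.le, zero_mul]
    exact max_lt hδ (by positivity)
  refine (integrable_exp_mul_prod_of_le_mul_add hcont.aestronglyMeasurable (le_max_right δ 0)
    (le_two_rpow_mul_add_of_rpow_triangle hc₀ hp₁ (rpow_cost_le_add hconv hφ0 hφpos hp hc) · x₀ ·)
    ?_ hint).exp_mul_of_le hcont.aestronglyMeasurable (fun q => hc₀ q.1 q.2) (le_max_left δ 0)
  convert hint using 4 with x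
  exact hsymm x x₀

theorem stmt7 {X : Type*} [MetricSpace X] [TopologicalSpace.SeparableSpace X] [CompleteSpace X]
    [MeasurableSpace X] [BorelSpace X]
    (μ : Measure X) [IsProbabilityMeasure μ]
    (φ : ℝ → ℝ) (hconv : ConvexOn ℝ (Set.Ici 0) φ) (hφ0 : φ 0 = 0)
    (hφpos : ∀ x > (0:ℝ), 0 < φ x)
    (hφ2 : ∃ K : ℝ, ∀ x > (0:ℝ), φ (2 * x) / φ x ≤ K)
    (c : X → X → ℝ) (hc : ∀ x y, c x y = φ (dist x y))
    (p₀ : ℝ) (hp₀ : IsLUB {p : ℝ | ∃ x > (0:ℝ), p = x * rderiv φ x / φ x} p₀)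
    (a' r₀ : ℝ) (ha' : 0 < a') (hr₀ : 0 ≤ r₀)
    (hconc : ∀ A : Set X, MeasurableSet A → ENNReal.ofReal (1/2) ≤ μ A →
      ∀ r : ℝ, r₀ ≤ r →
        1 - ENNReal.ofReal (Real.exp (-(r - r₀) ^ p₀ / a'))
          ≤ μ {x : X | ∃ y ∈ A, (c x y) ^ (1/p₀ : ℝ) ≤ r}) :
    (∀ x₀ : X, ∀ δ : ℝ, δ < 1 / a' →
      Integrable (fun y => Real.exp (δ * c x₀ y)) μ) ∧
    (∀ δ : ℝ, δ < 1 / (a' * 2 ^ (p₀ - 1)) →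
      Integrable (fun p : X × X => Real.exp (δ * c p.1 p.2)) (μ.prod μ)) :=
  stmt7_general μ φ hconv hφ0 hφpos c hc p₀ hp₀ a' r₀ ha' hconc
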